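/- For the automorphism χ_ℓ(a,b) = (a, a^ℓ b) of the torus T² with ℓ ≠ 0, every continuous group homomorphism ρ : T² → GL(n, ℂ) satisfying ρ ∘ χ_ℓ = ρ is trivial on the subgroup {1} × T¹; that is, ρ(1,b) = 1 for all b ∈ T¹. -/

import Mathlib

/-! If `ρ` is invariant under the shear `(a, b) ↦ (a, a ^ ℓ * b)`, then comparing
`ρ (a, a ^ ℓ) = ρ (a, 1) * ρ (1, a ^ ℓ)` with `ρ (a, 1)` kills every `ρ (1, a ^ ℓ)`; since `ℓ ≠ 0`,
every element of the circle is an `ℓ`-th power. -/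

theorem Circle.zpow_surjective {ℓ : ℤ} (hℓ : ℓ ≠ 0) :
    Function.Surjective (· ^ ℓ : Circle → Circle) :=
  haveI : NeZero ℓ := ⟨hℓ⟩
  (Circle.isQuotientCoveringMap_zpow ℓ).surjective

theorem MonoidHom.map_one_prod_eq_one_of_shear_invariant {G H M : Type*} [Monoid G] [Monoid H]
    [Monoid M] [IsLeftCancelMul M] (ρ : G × H →* M) (f : G → H)
    (hinv : ∀ a b, ρ (a, f a * b) = ρ (a, b)) (a : G) : ρ (1, f a) = 1 := by
  refine mul_left_cancel (a := ρ (a, 1)) ?_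
  calc ρ (a, 1) * ρ (1, f a) = ρ (a, f a * 1) := by
        rw [← map_mul, Prod.mk_mul_mk, mul_one, one_mul, mul_one]
    _ = ρ (a, 1) * 1 := by rw [hinv, mul_one]

theorem statement14_general (ℓ : ℤ) (hℓ : ℓ ≠ 0) (n : ℕ)
    (ρ : (Circle × Circle) →* GL (Fin n) ℂ)
    (hinv : ∀ a b : Circle, ρ (a, a ^ ℓ * b) = ρ (a, b)) :
    ∀ b : Circle, ρ (1, b) = 1 := by
  intro b
  obtain ⟨a, rfl⟩ := Circle.zpow_surjective hℓ b
  exact ρ.map_one_prod_eq_one_of_shear_invariant (· ^ ℓ) hinv a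

/-- For the automorphism `χ_ℓ (a, b) = (a, a^ℓ * b)` of the torus
`T² = Circle × Circle` with `ℓ ≠ 0`, every continuous group homomorphism
`ρ : T² → GL(n, ℂ)` satisfying `ρ ∘ χ_ℓ = ρ` is trivial on the subgroup
`{1} × T¹`: `ρ (1, b) = 1` for all `b`. -/
theorem statement14 (ℓ : ℤ) (hℓ : ℓ ≠ 0) (n : ℕ)
    (ρ : (Circle × Circle) →* GL (Fin n) ℂ)
    (hcont : Continuous fun x : Circle × Circle => ((ρ x : GL (Fin n) ℂ) : Matrix (Fin n) (Fin n) ℂ))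
    (hinv : ∀ a b : Circle, ρ (a, a ^ ℓ * b) = ρ (a, b)) :
    ∀ b : Circle, ρ (1, b) = 1 :=
  statement14_general ℓ hℓ n ρ hinv
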